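/- arXiv:1511.05323 — 3 statements merged into one kernel-verified Lean document; each statement's English description precedes it below -/
import Mathlib

section
/- Let x, y be complex numbers with y ≠ 0 and Re y ≥ 0, let θ := arg y ∈ [−π/2, π/2], and let r := |y|. Then P(x,y) = (y^{1/3}/2)·∫_{−∞}^{∞} exp( r^{4/3}·f_θ(s e^{−iθ/3}) − x y^{2/3} s² e^{−2iθ/3} )·e^{−iθ/3} ds, where the integral is absolutely convergent and all fractional powers of y are principal-branch powers. -/
open Real MeasureTheory

/-- The Pearcey-type integral `P(x,y) = ∫₀^∞ exp(−t⁴ − x t²)·cos(y t) dt`. -/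
noncomputable def P (x y : ℂ) : ℂ :=
  ∫ t in Set.Ioi (0 : ℝ), Complex.exp (-(t : ℂ) ^ 4 - x * (t : ℂ) ^ 2) * Complex.cos (y * t)

/-- The phase function `f_θ(t) = e^{4iθ/3}·(i t − t⁴)`. -/
noncomputable def f (θ : ℝ) (t : ℂ) : ℂ :=
  Complex.exp (Complex.I * (4 * (θ : ℂ) / 3)) * (Complex.I * t - t ^ 4)

/-!
Writing `cos (y t)` through exponentials and using evenness,
`2 P(x,y) = ∫_ℝ exp(−t⁴ − x t² + i y t) dt`.
With `c = |y|^{1/3}` and `y = c³ e^{iθ}`, the exponent of the rotated integrand at `s` is exactly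
this exponent at `t = c s`, and `y^{1/3} e^{−iθ/3} = c`; the substitution `t = c s` concludes.
-/

noncomputable def expQuartic (a b : ℂ) (t : ℝ) : ℂ :=
  Complex.exp (-(t : ℂ) ^ 4 - a * (t : ℂ) ^ 2 + b * t)

lemma continuous_expQuartic (a b : ℂ) : Continuous (expQuartic a b) := by
  unfold expQuartic
  fun_prop

lemma norm_expQuartic_le (a b : ℂ) (t : ℝ) :
    ‖expQuartic a b t‖ ≤
      Real.exp ((a.re ^ 2 + b.re ^ 2 + 1) / 2) * Real.exp (-(1 / 2) * t ^ 2) := by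
  have hre : (-(t : ℂ) ^ 4 - a * (t : ℂ) ^ 2 + b * t).re =
      -t ^ 4 - a.re * t ^ 2 + b.re * t := by
    simp [pow_succ, Complex.mul_re]
  rw [expQuartic, Complex.norm_exp, ← Real.exp_add, hre, Real.exp_le_exp]
  nlinarith [sq_nonneg (t ^ 2 + a.re), sq_nonneg (t - b.re), sq_nonneg (t ^ 2 - 1)]

lemma integrable_expQuartic (a b : ℂ) : Integrable (expQuartic a b) :=
  ((integrable_exp_neg_mul_sq (by norm_num : (0 : ℝ) < 1 / 2)).const_mul _).mono'
    (continuous_expQuartic a b).aestronglyMeasurable (.of_forall (norm_expQuartic_le a b))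

lemma integral_Ioi_add_comp_neg {E : Type*} [NormedAddCommGroup E] [NormedSpace ℝ E]
    {g : ℝ → E} (hg : Integrable g) : ∫ t in Set.Ioi 0, (g t + g (-t)) = ∫ t, g t := by
  have hneg : IntegrableOn (fun t => g (-t)) (Set.Ioi 0) := hg.comp_neg.integrableOn
  rw [integral_add hg.integrableOn hneg, integral_comp_neg_Ioi, neg_zero, add_comm,
    intervalIntegral.integral_Iic_add_Ioi hg.integrableOn hg.integrableOn]

lemma exp_mul_cos_eq_expQuartic (x y : ℂ) (t : ℝ) :
    Complex.exp (-(t : ℂ) ^ 4 - x * (t : ℂ) ^ 2) * Complex.cos (y * t) =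
      (expQuartic x (Complex.I * y) t + expQuartic x (Complex.I * y) (-t)) / 2 := by
  simp only [expQuartic, Complex.cos, Complex.ofReal_neg, sub_eq_add_neg, Complex.exp_add]
  ring_nf

lemma P_eq_half_integral_expQuartic (x y : ℂ) :
    P x y = (∫ t, expQuartic x (Complex.I * y) t) / 2 := by
  simp_rw [P, exp_mul_cos_eq_expQuartic, integral_div,
    integral_Ioi_add_comp_neg (integrable_expQuartic _ _)]

lemma cpow_ofReal_mul_exp_neg_arg {y : ℂ} (hy : y ≠ 0) (a : ℝ) :
    y ^ (a : ℂ) * Complex.exp (-Complex.I * (a * y.arg)) = ((‖y‖ ^ a : ℝ) : ℂ) := by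
  rw [Complex.cpow_def_of_ne_zero hy, ← Complex.exp_add,
    Real.rpow_def_of_pos (norm_pos_iff.mpr hy), Complex.ofReal_exp, Complex.log]
  push_cast
  ring_nf

lemma rotated_exponent_eq (x : ℂ) {y : ℂ} (hy : y ≠ 0) (s : ℝ) :
    (‖y‖ : ℂ) ^ ((4 : ℂ) / 3) * f y.arg (s * Complex.exp (-Complex.I * (y.arg / 3)))
        - x * y ^ ((2 : ℂ) / 3) * (s : ℂ) ^ 2 * Complex.exp (-Complex.I * (2 * y.arg / 3)) =
      -((‖y‖ ^ (1 / 3 : ℝ) * s : ℝ) : ℂ) ^ 4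
        - x * ((‖y‖ ^ (1 / 3 : ℝ) * s : ℝ) : ℂ) ^ 2
        + Complex.I * y * ((‖y‖ ^ (1 / 3 : ℝ) * s : ℝ) : ℂ) := by
  set c : ℝ := ‖y‖ ^ (1 / 3 : ℝ)
  set E := Complex.exp (-Complex.I * ((y.arg : ℂ) / 3))
  have hpow (n : ℕ) : (c : ℂ) ^ n = ((‖y‖ ^ (n / 3 : ℝ) : ℝ) : ℂ) := by
    rw [← Complex.ofReal_pow, ← Real.rpow_natCast, ← Real.rpow_mul (norm_nonneg y)]
    ring_nf
  have h4 : (‖y‖ : ℂ) ^ ((4 : ℂ) / 3) = (c : ℂ) ^ 4 := by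
    rw [hpow, Complex.ofReal_cpow (norm_nonneg y)]
    norm_num
  have h2 : y ^ ((2 : ℂ) / 3) * Complex.exp (-Complex.I * (2 * (y.arg : ℂ) / 3)) =
      (c : ℂ) ^ 2 := by
    rw [hpow, ← cpow_ofReal_mul_exp_neg_arg hy]
    push_cast
    ring_nf
  have hpolar : (c : ℂ) ^ 3 * Complex.exp (Complex.I * (y.arg : ℂ)) = y := by
    rw [hpow, mul_comm Complex.I]
    norm_num
  have hE1 : Complex.exp (Complex.I * (4 * (y.arg : ℂ) / 3)) * E =
      Complex.exp (Complex.I * (y.arg : ℂ)) := by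
    rw [← Complex.exp_add]; ring_nf
  have hE4 : Complex.exp (Complex.I * (4 * (y.arg : ℂ) / 3)) * E ^ 4 = 1 := by
    rw [← Complex.exp_nat_mul, ← Complex.exp_add, ← Complex.exp_zero]; push_cast; ring_nf
  rw [f, h4]
  push_cast
  linear_combination (c : ℂ) ^ 4 * Complex.I * s * hE1 + c * Complex.I * s * hpolar
    - (c : ℂ) ^ 4 * (s : ℂ) ^ 4 * hE4 - x * (s : ℂ) ^ 2 * h2

theorem pearcey_rotated_representation_general (x y : ℂ) (hy : y ≠ 0) :
    Integrable
      (fun s : ℝ =>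
        Complex.exp (((‖y‖ : ℂ)) ^ ((4 : ℂ) / 3) *
            f y.arg ((s : ℂ) * Complex.exp (-Complex.I * ((y.arg : ℂ) / 3)))
          - x * y ^ ((2 : ℂ) / 3) * (s : ℂ) ^ 2 *
            Complex.exp (-Complex.I * (2 * (y.arg : ℂ) / 3))) *
        Complex.exp (-Complex.I * ((y.arg : ℂ) / 3))) ∧
    P x y =
      (y ^ ((1 : ℂ) / 3) / 2) *
        ∫ s : ℝ,
          Complex.exp (((‖y‖ : ℂ)) ^ ((4 : ℂ) / 3) *
              f y.arg ((s : ℂ) * Complex.exp (-Complex.I * ((y.arg : ℂ) / 3)))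
            - x * y ^ ((2 : ℂ) / 3) * (s : ℂ) ^ 2 *
              Complex.exp (-Complex.I * (2 * (y.arg : ℂ) / 3))) *
          Complex.exp (-Complex.I * ((y.arg : ℂ) / 3)) := by
  simp_rw [rotated_exponent_eq x hy]
  set c : ℝ := ‖y‖ ^ (1 / 3 : ℝ)
  set E := Complex.exp (-Complex.I * ((y.arg : ℂ) / 3))
  have hc : 0 < c := Real.rpow_pos_of_pos (norm_pos_iff.mpr hy) _
  have hyE : y ^ ((1 : ℂ) / 3) * E = c := by
    simpa [E, c, div_eq_inv_mul] using cpow_ofReal_mul_exp_neg_arg hy (1 / 3)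
  refine ⟨((integrable_expQuartic x (Complex.I * y)).comp_mul_left' hc.ne').mul_const E, ?_⟩
  change P x y = _ * ∫ s, expQuartic x (Complex.I * y) (c * s) * E
  rw [P_eq_half_integral_expQuartic, integral_mul_const, Measure.integral_comp_mul_left,
    abs_of_pos (inv_pos.mpr hc), Complex.real_smul]
  have hc' : (c : ℂ) ≠ 0 := Complex.ofReal_ne_zero.mpr hc.ne'
  push_cast
  field_simp
  linear_combination -(∫ t, expQuartic x (Complex.I * y) t) * hyE

/-- For `y ≠ 0` with `Re y ≥ 0`, `θ = arg y` and `r = |y|`, one has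
`P(x,y) = (y^{1/3}/2)·∫_{−∞}^{∞} exp(r^{4/3} f_θ(s e^{−iθ/3}) − x y^{2/3} s² e^{−2iθ/3})·e^{−iθ/3} ds`,
the integral being absolutely convergent (principal-branch powers). -/
theorem pearcey_rotated_representation (x y : ℂ) (hy : y ≠ 0) (hre : 0 ≤ y.re) :
    Integrable
      (fun s : ℝ =>
        Complex.exp (((‖y‖ : ℂ)) ^ ((4 : ℂ) / 3) *
            f y.arg ((s : ℂ) * Complex.exp (-Complex.I * ((y.arg : ℂ) / 3)))
          - x * y ^ ((2 : ℂ) / 3) * (s : ℂ) ^ 2 *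
            Complex.exp (-Complex.I * (2 * (y.arg : ℂ) / 3))) *
        Complex.exp (-Complex.I * ((y.arg : ℂ) / 3))) ∧
    P x y =
      (y ^ ((1 : ℂ) / 3) / 2) *
        ∫ s : ℝ,
          Complex.exp (((‖y‖ : ℂ)) ^ ((4 : ℂ) / 3) *
              f y.arg ((s : ℂ) * Complex.exp (-Complex.I * ((y.arg : ℂ) / 3)))
            - x * y ^ ((2 : ℂ) / 3) * (s : ℂ) ^ 2 *
              Complex.exp (-Complex.I * (2 * (y.arg : ℂ) / 3))) *
          Complex.exp (-Complex.I * ((y.arg : ℂ) / 3)) :=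
  pearcey_rotated_representation_general x y hy
end

section
/- Let θ ∈ (π/8, π/2], x ∈ ℂ, r > 0, and set y := r e^{iθ} and g(t) := exp( r^{4/3}·f_θ(t) − x y^{2/3} t² ) for t ∈ ℂ (principal powers of y). Then both of the following integrals are absolutely convergent and equal: ∫_{−∞}^{∞} g(s e^{−iθ/3})·e^{−iθ/3} ds = ∫_{−∞}^{∞} g( 4^{−1/3}·e^{5iπ/6} + s·e^{i(π−4θ)/6} )·e^{i(π−4θ)/6} ds. -/
open Real MeasureTheory

/-!
Cauchy's theorem, in the form of a homotopy of lines: for `τ ∈ [0, 1]` let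
`L_τ = linePt t₂ α d τ` be the line through `τ t₂` with direction `e^{i(α + τ d)}`, where
`α = −θ/3` and `d = (π − 2θ)/6`, so that `L₀` is the rotated real line and `L₁` the
steepest-descent line. Since `h(z) dz` is closed for holomorphic `h`, the `τ`-derivative of
`h(L_τ(s)) ∂ₛL_τ` is the `s`-derivative of `h(L_τ(s)) ∂_τL_τ`, so `τ ↦ ∫ h(L_τ(s)) ∂ₛL_τ ds`
has derivative zero once differentiation under the integral is justified. For `h = exp ∘ E` with
`E` a quartic, `E(L_τ(s))` is dominated by its quartic term `−q (s e^{i(α+τd)})⁴`, whose real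
part is `−|q| s⁴ cos (4τd)` when `arg q = −4α`; as `4|d| < π/2` this gives a Gaussian bound
uniform for `τ` near `[0, 1]`.
-/

open Set Filter
open scoped Complex

theorem integral_eq_integral_of_hasDerivAt_param {E : Type*} [NormedAddCommGroup E]
    [NormedSpace ℝ E] [CompleteSpace E] {F G F' : ℝ → ℝ → E} {U : Set ℝ} {a b : ℝ}
    {bound : ℝ → ℝ} (hU : IsOpen U) (hab : a ≤ b) (habU : Icc a b ⊆ U)
    (hF : ∀ τ ∈ U, Integrable (F τ)) (hG : ∀ τ ∈ Icc a b, Integrable (G τ))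
    (hF' : ∀ τ ∈ U, ∀ s, HasDerivAt (F · s) (F' τ s) τ)
    (hG' : ∀ τ ∈ Icc a b, ∀ s, HasDerivAt (G τ) (F' τ s) s)
    (h_le : ∀ τ ∈ U, ∀ s, ‖F' τ s‖ ≤ bound s) (hbound : Integrable bound) :
    ∫ s, F a s = ∫ s, F b s := by
  have hderiv : ∀ τ ∈ Icc a b, HasDerivAt (fun τ ↦ ∫ s, F τ s) 0 τ := by
    intro τ hτ
    have hF'_eq : F' τ = deriv (G τ) := funext fun s ↦ (hG' τ hτ s).deriv.symm
    obtain ⟨hF'_int, hI⟩ := hasDerivAt_integral_of_dominated_loc_of_deriv_le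
      (hU.mem_nhds (habU hτ))
      (eventually_of_mem (hU.mem_nhds (habU hτ)) fun τ hτ ↦ (hF τ hτ).aestronglyMeasurable)
      (hF τ (habU hτ)) (hF'_eq ▸ aestronglyMeasurable_deriv _ _)
      (ae_of_all _ fun s τ hτ ↦ h_le τ hτ s) hbound (ae_of_all _ fun s τ hτ ↦ hF' τ hτ s)
    rwa [integral_eq_zero_of_hasDerivAt_of_integrable (hG' τ hτ) hF'_int (hG τ hτ)] at hI
  exact (constant_of_has_deriv_right_zero (fun τ hτ ↦ (hderiv τ hτ).continuousAt.continuousWithinAt)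
    (fun τ hτ ↦ (hderiv τ (Ico_subset_Icc_self hτ)).hasDerivWithinAt) b
    (right_mem_Icc.2 hab)).symm

noncomputable def lineDir (α d τ : ℝ) : ℂ := cexp (↑(α + τ * d) * Complex.I)

noncomputable def linePt (p : ℂ) (α d τ s : ℝ) : ℂ := τ * p + s * lineDir α d τ

noncomputable def lineVel (p : ℂ) (α d τ s : ℝ) : ℂ := p + s * (d * Complex.I * lineDir α d τ)

lemma norm_lineDir (α d τ : ℝ) : ‖lineDir α d τ‖ = 1 := Complex.norm_exp_ofReal_mul_I _

lemma hasDerivAt_lineDir (α d τ : ℝ) :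
    HasDerivAt (lineDir α d) (d * Complex.I * lineDir α d τ) τ := by
  have h : HasDerivAt (fun τ : ℝ ↦ (↑(α + τ * d) : ℂ) * Complex.I) (d * Complex.I) τ := by
    simpa using (((hasDerivAt_id τ).mul_const d).const_add α).ofReal_comp.mul_const Complex.I
  exact h.cexp.congr_deriv (mul_comm _ _)

lemma hasDerivAt_linePt_param (p : ℂ) (α d τ s : ℝ) :
    HasDerivAt (linePt p α d · s) (lineVel p α d τ s) τ := by
  have h := ((hasDerivAt_id τ).ofReal_comp.mul_const p).add
    ((hasDerivAt_lineDir α d τ).const_mul (s : ℂ))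
  unfold lineVel
  exact h.congr_deriv (by simp)

lemma hasDerivAt_linePt (p : ℂ) (α d τ s : ℝ) :
    HasDerivAt (linePt p α d τ) (lineDir α d τ) s := by
  have h := ((hasDerivAt_id s).ofReal_comp.mul_const (lineDir α d τ)).const_add ((τ : ℂ) * p)
  exact h.congr_deriv (by simp)

lemma norm_lineVel_le (p : ℂ) (α d τ s : ℝ) :
    ‖lineVel p α d τ s‖ ≤ (‖p‖ + |d|) * (1 + |s|) := by
  rw [lineVel]
  have h : ‖(s : ℂ) * (d * Complex.I * lineDir α d τ)‖ = |s| * |d| := by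
    simp [norm_lineDir]
  have := norm_add_le p ((s : ℂ) * (d * Complex.I * lineDir α d τ))
  nlinarith [norm_nonneg p, abs_nonneg s, abs_nonneg d]

section LineHomotopy

variable {h h' : ℂ → ℂ} (hh : ∀ z, HasDerivAt h (h' z) z) (p : ℂ) (α d : ℝ)
include hh

/- Closedness of `h(z) dz`: the `τ`-derivative of `h(γ) ∂ₛγ` and the `s`-derivative of
`h(γ) ∂_τγ` agree, for `γ = linePt p α d`. -/
lemma hasDerivAt_comp_linePt_mul_lineDir (τ s : ℝ) :
    HasDerivAt (fun τ ↦ h (linePt p α d τ s) * lineDir α d τ)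
      (h' (linePt p α d τ s) * lineVel p α d τ s * lineDir α d τ +
        h (linePt p α d τ s) * (d * Complex.I * lineDir α d τ)) τ :=
  ((hh _).comp τ (hasDerivAt_linePt_param p α d τ s)).mul (hasDerivAt_lineDir α d τ)

lemma hasDerivAt_comp_linePt_mul_lineVel (τ s : ℝ) :
    HasDerivAt (fun s : ℝ ↦ h (linePt p α d τ s) * lineVel p α d τ s)
      (h' (linePt p α d τ s) * lineVel p α d τ s * lineDir α d τ +
        h (linePt p α d τ s) * (d * Complex.I * lineDir α d τ)) s := by
  have h2 := ((hasDerivAt_id s).ofReal_comp.mul_const (d * Complex.I * lineDir α d τ)).const_add p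
  exact (((hh _).comp s (hasDerivAt_linePt p α d τ s)).mul h2).congr_deriv
    (by simp only [Function.comp_apply, Complex.ofReal_one, id, lineVel]; ring)

section Dominated

variable {U : Set ℝ} {bound : ℝ → ℝ} (hbound : Integrable bound)
  (h_le : ∀ τ ∈ U, ∀ s : ℝ,
    (1 + |s|) * (‖h' (linePt p α d τ s)‖ + ‖h (linePt p α d τ s)‖) ≤ bound s)
include hbound h_le

lemma integrable_comp_linePt_mul {τ : ℝ} (hτ : τ ∈ U) (c : ℝ) (v : ℝ → ℂ) (hv : Continuous v)
    (hv_le : ∀ s, ‖v s‖ ≤ c * (1 + |s|)) :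
    Integrable fun s ↦ h (linePt p α d τ s) * v s := by
  have hcont : Continuous fun s ↦ h (linePt p α d τ s) :=
    continuous_iff_continuousAt.2 fun s ↦
      (hh _).continuousAt.comp (hasDerivAt_linePt p α d τ s).continuousAt
  refine ((hbound.const_mul c)).mono' (hcont.mul hv).aestronglyMeasurable (ae_of_all _ fun s ↦ ?_)
  have hc : 0 ≤ c := (norm_nonneg _).trans (by simpa using hv_le 0)
  rw [norm_mul]
  nlinarith [mul_le_mul_of_nonneg_left (hv_le s) (norm_nonneg (h (linePt p α d τ s))),
    mul_le_mul_of_nonneg_left (h_le τ hτ s) hc,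
    mul_nonneg (mul_nonneg hc (abs_nonneg s)) (norm_nonneg (h' (linePt p α d τ s))),
    mul_nonneg hc (norm_nonneg (h' (linePt p α d τ s)))]

lemma integrable_comp_linePt_mul_lineDir {τ : ℝ} (hτ : τ ∈ U) :
    Integrable fun s ↦ h (linePt p α d τ s) * lineDir α d τ :=
  integrable_comp_linePt_mul hh p α d hbound h_le hτ 1 _ continuous_const
    fun s ↦ by simp [norm_lineDir]

theorem integral_comp_linePt_zero_eq_one (hU : IsOpen U) (hU01 : Icc 0 1 ⊆ U) :
    ∫ s, h (linePt p α d 0 s) * lineDir α d 0 = ∫ s, h (linePt p α d 1 s) * lineDir α d 1 := by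
  refine integral_eq_integral_of_hasDerivAt_param hU zero_le_one hU01
    (G := fun τ s ↦ h (linePt p α d τ s) * lineVel p α d τ s)
    (bound := fun s ↦ (‖p‖ + |d|) * bound s)
    (fun τ hτ ↦ integrable_comp_linePt_mul_lineDir hh p α d hbound h_le hτ)
    (fun τ hτ ↦ integrable_comp_linePt_mul hh p α d hbound h_le (hU01 hτ) _ _
      (by unfold lineVel; fun_prop) (norm_lineVel_le p α d τ))
    (fun τ _ s ↦ hasDerivAt_comp_linePt_mul_lineDir hh p α d τ s)
    (fun τ _ s ↦ hasDerivAt_comp_linePt_mul_lineVel hh p α d τ s) (fun τ hτ s ↦ ?_)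
    (hbound.const_mul _)
  set z := linePt p α d τ s
  have hv := norm_lineVel_le p α d τ s
  have hw : ‖(d : ℂ) * Complex.I * lineDir α d τ‖ = |d| := by simp [norm_lineDir]
  calc ‖h' z * lineVel p α d τ s * lineDir α d τ + h z * (d * Complex.I * lineDir α d τ)‖
      ≤ ‖h' z‖ * ((‖p‖ + |d|) * (1 + |s|)) + ‖h z‖ * |d| := by
        refine (norm_add_le _ _).trans ?_
        rw [norm_mul, norm_mul, norm_lineDir, mul_one, norm_mul, hw]
        gcongr
    _ ≤ (‖p‖ + |d|) * ((1 + |s|) * (‖h' z‖ + ‖h z‖)) := by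
        nlinarith [norm_nonneg (h' z), norm_nonneg (h z), norm_nonneg p, abs_nonneg s,
          abs_nonneg d, mul_nonneg (norm_nonneg (h z)) (abs_nonneg s)]
    _ ≤ (‖p‖ + |d|) * bound s := by gcongr; exact h_le τ hτ s

end Dominated

end LineHomotopy

noncomputable def quartic (b₁ b₂ q z : ℂ) : ℂ := b₁ * z + b₂ * z ^ 2 - q * z ^ 4

lemma hasDerivAt_quartic (b₁ b₂ q z : ℂ) :
    HasDerivAt (quartic b₁ b₂ q) (b₁ + 2 * b₂ * z - 4 * q * z ^ 3) z := by
  have h := (((hasDerivAt_id z).const_mul b₁).add ((hasDerivAt_pow 2 z).const_mul b₂)).sub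
    ((hasDerivAt_pow 4 z).const_mul q)
  exact h.congr_deriv (by ring)

lemma norm_pow_four_sub_pow_four_le (u v : ℂ) : ‖u ^ 4 - v ^ 4‖ ≤ ‖u - v‖ * (‖u‖ + ‖v‖) ^ 3 := by
  have hsum : ‖u ^ 3 + u ^ 2 * v + u * v ^ 2 + v ^ 3‖ ≤ (‖u‖ + ‖v‖) ^ 3 := by
    refine (norm_add₄_le ..).trans ?_
    simp only [norm_mul, norm_pow]
    nlinarith [norm_nonneg u, norm_nonneg v, mul_nonneg (norm_nonneg u) (norm_nonneg v),
      mul_nonneg (mul_nonneg (norm_nonneg u) (norm_nonneg v)) (norm_nonneg u),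
      mul_nonneg (mul_nonneg (norm_nonneg u) (norm_nonneg v)) (norm_nonneg v)]
  calc ‖u ^ 4 - v ^ 4‖ = ‖u - v‖ * ‖u ^ 3 + u ^ 2 * v + u * v ^ 2 + v ^ 3‖ := by
        rw [← norm_mul]; ring_nf
    _ ≤ ‖u - v‖ * (‖u‖ + ‖v‖) ^ 3 := by gcongr

lemma exists_mul_add_one_pow_three_le (c : ℝ) {κ : ℝ} (hκ : 0 < κ) :
    ∃ D, ∀ t : ℝ, 0 ≤ t → c * (1 + t) ^ 3 ≤ κ * t ^ 4 + D := by
  set B := 4 * |c|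
  refine ⟨B + B * (B / κ) ^ 3, fun t ht ↦ ?_⟩
  have hB : 0 ≤ B := by positivity
  have hcubic : c * (1 + t) ^ 3 ≤ B + B * t ^ 3 := by
    have : t + t ^ 2 ≤ 1 + t ^ 3 := by nlinarith [sq_nonneg (1 - t)]
    nlinarith [le_abs_self c, abs_nonneg c, pow_nonneg (by linarith : (0:ℝ) ≤ 1 + t) 3]
  rcases le_total t (B / κ) with h | h
  · have := pow_le_pow_left₀ ht h 3
    nlinarith [mul_le_mul_of_nonneg_left this hB, pow_nonneg ht 4]
  · have : B ≤ κ * t := by rwa [div_le_iff₀' hκ] at h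
    nlinarith [mul_le_mul_of_nonneg_right this (pow_nonneg ht 3),
      pow_nonneg (div_nonneg hB hκ.le) 3]

section Estimates

variable {R s : ℝ} {w z : ℂ} (hw : ‖w‖ = 1) (hz : ‖z - s * w‖ ≤ R)
include hw hz

lemma norm_le_of_norm_sub_mul_le : ‖z‖ ≤ R + |s| := by
  have h := norm_le_norm_sub_add z (s * w)
  rw [norm_mul, hw, Complex.norm_real, Real.norm_eq_abs, mul_one] at h
  linarith

lemma norm_pow_le_of_norm_sub_mul_le {k : ℕ} (hk : k ≤ 3) :
    ‖z‖ ^ k ≤ ((1 + R) * (1 + |s|)) ^ 3 := by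
  have hR : 0 ≤ R := (norm_nonneg _).trans hz
  have hz' : ‖z‖ ≤ (1 + R) * (1 + |s|) := by
    nlinarith [abs_nonneg s, norm_le_of_norm_sub_mul_le hw hz]
  have hM : 1 ≤ (1 + R) * (1 + |s|) := by nlinarith [abs_nonneg s]
  exact (pow_le_pow_left₀ (norm_nonneg z) hz' k).trans (pow_le_pow_right₀ hM hk)

lemma norm_deriv_quartic_le (b₁ b₂ q : ℂ) :
    ‖b₁ + 2 * b₂ * z - 4 * q * z ^ 3‖ ≤
      (‖b₁‖ + 2 * ‖b₂‖ + 4 * ‖q‖) * ((1 + R) * (1 + |s|)) ^ 3 := by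
  have h0 := norm_pow_le_of_norm_sub_mul_le hw hz (k := 0) (by norm_num)
  have h1 := norm_pow_le_of_norm_sub_mul_le hw hz (k := 1) (by norm_num)
  have h3 := norm_pow_le_of_norm_sub_mul_le hw hz (k := 3) (by norm_num)
  rw [pow_zero] at h0; rw [pow_one] at h1
  calc ‖b₁ + 2 * b₂ * z - 4 * q * z ^ 3‖ ≤ ‖b₁‖ + ‖2 * b₂ * z‖ + ‖4 * q * z ^ 3‖ :=
        (norm_sub_le _ _).trans (by gcongr; exact norm_add_le _ _)
    _ = ‖b₁‖ + 2 * ‖b₂‖ * ‖z‖ + 4 * ‖q‖ * ‖z‖ ^ 3 := by simp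
    _ ≤ (‖b₁‖ + 2 * ‖b₂‖ + 4 * ‖q‖) * ((1 + R) * (1 + |s|)) ^ 3 := by
        nlinarith [mul_le_mul_of_nonneg_left h0 (norm_nonneg b₁),
          mul_le_mul_of_nonneg_left h1 (norm_nonneg b₂),
          mul_le_mul_of_nonneg_left h3 (norm_nonneg q)]

lemma re_quartic_le (b₁ b₂ q : ℂ) :
    (quartic b₁ b₂ q z).re ≤
      (‖b₁‖ + ‖b₂‖ + 8 * ‖q‖ * R) * ((1 + R) * (1 + |s|)) ^ 3 - s ^ 4 * (q * w ^ 4).re := by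
  set M := (1 + R) * (1 + |s|)
  have h1 := norm_pow_le_of_norm_sub_mul_le hw hz (k := 1) (by norm_num)
  have h2 := norm_pow_le_of_norm_sub_mul_le hw hz (k := 2) (by norm_num)
  rw [pow_one] at h1
  have hsplit : quartic b₁ b₂ q z =
      b₁ * z + b₂ * z ^ 2 - q * (z ^ 4 - (s * w) ^ 4) - (s ^ 4 : ℝ) * (q * w ^ 4) := by
    simp only [quartic]; push_cast; ring
  have hdiff : ‖z ^ 4 - (s * w) ^ 4‖ ≤ 8 * R * M ^ 3 := by
    have hsw : ‖(s : ℂ) * w‖ = |s| := by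
      rw [norm_mul, hw, mul_one, Complex.norm_real, Real.norm_eq_abs]
    have hsum : ‖z‖ + ‖(s : ℂ) * w‖ ≤ 2 * M := by
      rw [hsw]
      nlinarith [abs_nonneg s, (norm_nonneg _).trans hz, norm_le_of_norm_sub_mul_le hw hz]
    calc ‖z ^ 4 - (s * w) ^ 4‖ ≤ R * (2 * M) ^ 3 :=
          (norm_pow_four_sub_pow_four_le _ _).trans
            (mul_le_mul hz (pow_le_pow_left₀ (by positivity) hsum 3) (by positivity)
              ((norm_nonneg _).trans hz))
      _ = 8 * R * M ^ 3 := by ring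
  rw [hsplit, Complex.sub_re, Complex.sub_re, Complex.add_re, Complex.re_ofReal_mul]
  have e1 : (b₁ * z).re ≤ ‖b₁‖ * M ^ 3 := (Complex.re_le_norm _).trans
    (by rw [norm_mul]; exact mul_le_mul_of_nonneg_left h1 (norm_nonneg b₁))
  have e2 : (b₂ * z ^ 2).re ≤ ‖b₂‖ * M ^ 3 := (Complex.re_le_norm _).trans
    (by rw [norm_mul, norm_pow]; exact mul_le_mul_of_nonneg_left h2 (norm_nonneg b₂))
  have e3 : |(q * (z ^ 4 - (s * w) ^ 4)).re| ≤ ‖q‖ * (8 * R * M ^ 3) :=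
    (Complex.abs_re_le_norm _).trans
      (by rw [norm_mul]; exact mul_le_mul_of_nonneg_left hdiff (norm_nonneg q))
  nlinarith [neg_abs_le (q * (z ^ 4 - (s * w) ^ 4)).re]

end Estimates

lemma exists_abs_add_re_quartic_le (b₁ b₂ q : ℂ) (R : ℝ) {m : ℝ} (hm : 0 < m) :
    ∃ D, ∀ (s : ℝ) (w z : ℂ), ‖w‖ = 1 → ‖z - s * w‖ ≤ R → m ≤ (q * w ^ 4).re →
      4 * |s| + (quartic b₁ b₂ q z).re ≤ D - s ^ 2 := by
  set c := (‖b₁‖ + ‖b₂‖ + 8 * ‖q‖ * R) * (1 + R) ^ 3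
  obtain ⟨D, hD⟩ := exists_mul_add_one_pow_three_le (c + 5) hm
  refine ⟨D, fun s w z hw hz hq ↦ ?_⟩
  have hre : (quartic b₁ b₂ q z).re ≤ c * (1 + |s|) ^ 3 - s ^ 4 * (q * w ^ 4).re :=
    (re_quartic_le hw hz b₁ b₂ q).trans_eq (by ring)
  have hquartic : m * s ^ 4 ≤ s ^ 4 * (q * w ^ 4).re := by
    nlinarith [pow_nonneg (sq_nonneg s) 2]
  have hlower : 4 * |s| + s ^ 2 ≤ 5 * (1 + |s|) ^ 3 := by nlinarith [sq_abs s, abs_nonneg s]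
  have := hD |s| (abs_nonneg s)
  rw [pow_abs, abs_of_nonneg (by positivity : (0 : ℝ) ≤ s ^ 4)] at this
  nlinarith

lemma exists_bound_cexp_quartic (b₁ b₂ q : ℂ) {R m : ℝ} (hR : 0 ≤ R) (hm : 0 < m) :
    ∃ C, ∀ (s : ℝ) (w z : ℂ), ‖w‖ = 1 → ‖z - s * w‖ ≤ R → m ≤ (q * w ^ 4).re →
      (1 + |s|) * (‖cexp (quartic b₁ b₂ q z) * (b₁ + 2 * b₂ * z - 4 * q * z ^ 3)‖ +
        ‖cexp (quartic b₁ b₂ q z)‖) ≤ C * rexp (-s ^ 2) := by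
  set c := (‖b₁‖ + 2 * ‖b₂‖ + 4 * ‖q‖) * (1 + R) ^ 3
  obtain ⟨D, hD⟩ := exists_abs_add_re_quartic_le b₁ b₂ q R hm
  refine ⟨(c + 1) * rexp D, fun s w z hw hz hq ↦ ?_⟩
  set u := 1 + |s|
  set E := quartic b₁ b₂ q z
  set E' := b₁ + 2 * b₂ * z - 4 * q * z ^ 3
  have hu : 1 ≤ u := by linarith [abs_nonneg s]
  have hE' : ‖E'‖ ≤ c * u ^ 3 := (norm_deriv_quartic_le hw hz b₁ b₂ q).trans_eq (by ring)
  have hpoly : u * (‖E'‖ + 1) ≤ (c + 1) * u ^ 4 := by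
    nlinarith [mul_le_mul_of_nonneg_left hE' (by positivity : (0 : ℝ) ≤ u), one_le_pow₀ hu (n := 3)]
  -- the polynomial factor is absorbed into the exponent
  have hu4 : u ^ 4 ≤ rexp (4 * |s|) := by
    rw [show 4 * |s| = ((4 : ℕ) : ℝ) * |s| by norm_num, Real.exp_nat_mul]
    exact pow_le_pow_left₀ (by positivity) (by linarith [Real.add_one_le_exp |s|]) 4
  have hc : 0 ≤ c := by positivity
  rw [norm_mul, Complex.norm_exp]
  calc u * (rexp E.re * ‖E'‖ + rexp E.re) = u * (‖E'‖ + 1) * rexp E.re := by ring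
    _ ≤ (c + 1) * rexp (4 * |s|) * rexp E.re :=
        mul_le_mul_of_nonneg_right (hpoly.trans (by gcongr)) (Real.exp_pos _).le
    _ = (c + 1) * rexp (4 * |s| + E.re) := by rw [Real.exp_add]; ring
    _ ≤ (c + 1) * rexp (D + -s ^ 2) :=
        mul_le_mul_of_nonneg_left (Real.exp_le_exp.2 (by linarith [hD s w z hw hz hq]))
          (by linarith)
    _ = (c + 1) * rexp D * rexp (-s ^ 2) := by rw [Real.exp_add]; ring

lemma norm_linePt_sub_mul_lineDir (p : ℂ) (α d τ s : ℝ) :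
    ‖linePt p α d τ s - s * lineDir α d τ‖ = |τ| * ‖p‖ := by
  simp [linePt]

lemma re_mul_lineDir_pow_four (ρ α d τ : ℝ) :
    ((ρ : ℂ) * cexp (↑(-(4 * α)) * Complex.I) * lineDir α d τ ^ 4).re = ρ * cos (4 * (τ * d)) := by
  rw [lineDir, ← Complex.exp_nat_mul, mul_assoc, ← Complex.exp_add,
    show (↑(-(4 * α)) * Complex.I + ((4 : ℕ) : ℂ) * (↑(α + τ * d) * Complex.I)) =
      ↑(4 * (τ * d)) * Complex.I by push_cast; ring,
    Complex.re_ofReal_mul, Complex.exp_ofReal_mul_I_re]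

lemma exists_isOpen_forall_le_re_mul_lineDir_pow_four {ρ d : ℝ} (hρ : 0 < ρ) (hd : |d| < π / 8)
    (α : ℝ) : ∃ U : Set ℝ, IsOpen U ∧ Icc 0 1 ⊆ U ∧ ∃ m > 0, ∀ τ ∈ U, |τ| ≤ 2 ∧
      m ≤ ((ρ : ℂ) * cexp (↑(-(4 * α)) * Complex.I) * lineDir α d τ ^ 4).re := by
  have hcos : 0 < cos (4 * d) :=
    cos_pos_of_mem_Ioo ⟨by linarith [neg_abs_le d], by linarith [le_abs_self d]⟩
  refine ⟨{τ | |τ| < 2 ∧ cos (4 * d) / 2 < cos (4 * (τ * d))},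
    (isOpen_lt continuous_abs continuous_const).inter (isOpen_lt continuous_const
      (by fun_prop : Continuous fun τ : ℝ ↦ cos (4 * (τ * d)))),
    fun τ hτ ↦ ⟨?_, ?_⟩, ρ * (cos (4 * d) / 2), by positivity, fun τ hτ ↦ ⟨hτ.1.le, ?_⟩⟩
  · rw [abs_of_nonneg hτ.1]; linarith [hτ.2]
  · have hle : |4 * (τ * d)| ≤ |4 * d| := by
      rw [abs_mul, abs_mul, abs_mul, abs_of_nonneg hτ.1]
      have := mul_le_mul_of_nonneg_right hτ.2 (abs_nonneg d)
      gcongr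
      linarith
    calc cos (4 * d) / 2 < cos |4 * d| := by rw [cos_abs]; linarith
      _ ≤ cos |4 * (τ * d)| := cos_le_cos_of_nonneg_of_le_pi (abs_nonneg _)
          (by rw [abs_mul]; norm_num; linarith [pi_pos]) hle
      _ = cos (4 * (τ * d)) := cos_abs _
  · rw [re_mul_lineDir_pow_four]; exact mul_le_mul_of_nonneg_left hτ.2.le hρ.le

theorem integral_cexp_quartic_linePt_zero_eq_one (b₁ b₂ p : ℂ) {ρ d : ℝ} (hρ : 0 < ρ)
    (hd : |d| < π / 8) (α : ℝ) :
    let F := fun τ s : ℝ ↦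
      cexp (quartic b₁ b₂ (ρ * cexp (↑(-(4 * α)) * Complex.I)) (linePt p α d τ s)) * lineDir α d τ
    Integrable (F 0) ∧ Integrable (F 1) ∧ ∫ s, F 0 s = ∫ s, F 1 s := by
  intro F
  set q : ℂ := ρ * cexp (↑(-(4 * α)) * Complex.I)
  obtain ⟨U, hU, hU01, m, hm, hUτ⟩ := exists_isOpen_forall_le_re_mul_lineDir_pow_four hρ hd α
  obtain ⟨C, hC⟩ := exists_bound_cexp_quartic b₁ b₂ q (by positivity : 0 ≤ 2 * ‖p‖) hm
  have hh z := (hasDerivAt_quartic b₁ b₂ q z).cexp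
  have hbound : Integrable fun s : ℝ ↦ C * rexp (-s ^ 2) := by
    simpa using (integrable_exp_neg_mul_sq one_pos).const_mul C
  have h_le : ∀ τ ∈ U, ∀ s : ℝ, (1 + |s|) * (‖cexp (quartic b₁ b₂ q (linePt p α d τ s)) *
      (b₁ + 2 * b₂ * linePt p α d τ s - 4 * q * linePt p α d τ s ^ 3)‖ +
        ‖cexp (quartic b₁ b₂ q (linePt p α d τ s))‖) ≤ C * rexp (-s ^ 2) := fun τ hτ s ↦
    hC s _ _ (norm_lineDir α d τ) (by rw [norm_linePt_sub_mul_lineDir]; gcongr; exact (hUτ τ hτ).1)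
      (hUτ τ hτ).2
  exact ⟨integrable_comp_linePt_mul_lineDir hh p α d hbound h_le (hU01 ⟨le_rfl, zero_le_one⟩),
    integrable_comp_linePt_mul_lineDir hh p α d hbound h_le (hU01 ⟨zero_le_one, le_rfl⟩),
    integral_comp_linePt_zero_eq_one hh p α d hbound h_le hU hU01⟩

lemma cpow_mul_f_sub_eq_quartic (θ : ℝ) {r : ℝ} (hr : 0 ≤ r) (b t : ℂ) :
    (r : ℂ) ^ ((4 : ℂ) / 3) * f θ t - b * t ^ 2 =
      quartic (Complex.I * (↑(r ^ ((4 : ℝ) / 3)) * cexp (↑(-(4 * (-θ / 3))) * Complex.I))) (-b)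
        (↑(r ^ ((4 : ℝ) / 3)) * cexp (↑(-(4 * (-θ / 3))) * Complex.I)) t := by
  have hρ : (r : ℂ) ^ ((4 : ℂ) / 3) = ↑(r ^ ((4 : ℝ) / 3)) := by
    rw [Complex.ofReal_cpow hr]; norm_num
  have hphase : cexp (↑(-(4 * (-θ / 3))) * Complex.I) = cexp (Complex.I * (4 * θ / 3)) := by
    congr 1; push_cast; ring
  rw [hρ, hphase, f, quartic]
  ring

/-- For `π/8 < θ ≤ π/2`, `x ∈ ℂ`, `r > 0`, `y = r e^{iθ}` and
`g(t) = exp(r^{4/3} f_θ(t) − x y^{2/3} t²)`, the integrals of `g` along the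
rotated real line `{s e^{−iθ/3}}` and along the steepest-descent line through
`t₂ = 4^{−1/3} e^{5iπ/6}` with direction `e^{i(π−4θ)/6}` are both absolutely
convergent and equal. -/
theorem pearcey_path_deformation_case2 (θ : ℝ) (hθ : θ ∈ Set.Ioc (π / 8) (π / 2))
    (x : ℂ) (r : ℝ) (hr : 0 < r) :
    let y : ℂ := (r : ℂ) * Complex.exp (Complex.I * (θ : ℂ))
    let g : ℂ → ℂ := fun t =>
      Complex.exp ((r : ℂ) ^ ((4 : ℂ) / 3) * f θ t - x * y ^ ((2 : ℂ) / 3) * t ^ 2)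
    (Integrable fun s : ℝ =>
        g ((s : ℂ) * Complex.exp (-Complex.I * ((θ : ℂ) / 3))) *
          Complex.exp (-Complex.I * ((θ : ℂ) / 3))) ∧
    (Integrable fun s : ℝ =>
        g ((4 : ℂ) ^ (-(1 : ℂ) / 3) * Complex.exp (Complex.I * (5 * (π : ℂ) / 6)) +
            (s : ℂ) * Complex.exp (Complex.I * (((π : ℂ) - 4 * (θ : ℂ)) / 6))) *
          Complex.exp (Complex.I * (((π : ℂ) - 4 * (θ : ℂ)) / 6))) ∧
    (∫ s : ℝ,
        g ((s : ℂ) * Complex.exp (-Complex.I * ((θ : ℂ) / 3))) *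
          Complex.exp (-Complex.I * ((θ : ℂ) / 3))) =
      ∫ s : ℝ,
        g ((4 : ℂ) ^ (-(1 : ℂ) / 3) * Complex.exp (Complex.I * (5 * (π : ℂ) / 6)) +
            (s : ℂ) * Complex.exp (Complex.I * (((π : ℂ) - 4 * (θ : ℂ)) / 6))) *
          Complex.exp (Complex.I * (((π : ℂ) - 4 * (θ : ℂ)) / 6)) := by
  intro y g
  obtain ⟨hθ₁, hθ₂⟩ := hθ
  have hd : |(π - 2 * θ) / 6| < π / 8 := by rw [abs_of_nonneg] <;> linarith
  have hdir₀ : cexp (-Complex.I * ((θ : ℂ) / 3)) = lineDir (-θ / 3) ((π - 2 * θ) / 6) 0 := by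
    rw [lineDir]; congr 1; push_cast; ring
  have hdir₁ : cexp (Complex.I * (((π : ℂ) - 4 * (θ : ℂ)) / 6)) =
      lineDir (-θ / 3) ((π - 2 * θ) / 6) 1 := by
    rw [lineDir]; congr 1; push_cast; ring
  have key := integral_cexp_quartic_linePt_zero_eq_one
    (Complex.I * (↑(r ^ ((4 : ℝ) / 3)) * cexp (↑(-(4 * (-θ / 3))) * Complex.I)))
    (-(x * y ^ ((2 : ℂ) / 3))) ((4 : ℂ) ^ (-(1 : ℂ) / 3) * cexp (Complex.I * (5 * (π : ℂ) / 6)))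
    (Real.rpow_pos_of_pos hr ((4 : ℝ) / 3)) hd (-θ / 3)
  simp only [linePt, ← hdir₀, ← hdir₁, ← cpow_mul_f_sub_eq_quartic θ hr.le, Complex.ofReal_zero,
    Complex.ofReal_one, zero_mul, zero_add, one_mul] at key
  exact key
end

section
/- For every θ ∈ [−π/8, π/8], with W(θ) := 4^{−1/3}·e^{iπ/6} + 2^{−2/3}·e^{−i(π+4θ)/6} and U(θ) := 4^{−1/3}·e^{5iπ/6} − 2^{−2/3}·e^{i(π−4θ)/6}, one has Re f_θ(W(θ)) ≤ −1.38 and Re f_θ(U(θ)) ≤ −1.38. -/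
open Real

/-- `W(θ) = t₁ + 2^{−2/3}·e^{−i(π+4θ)/6}`. -/
noncomputable def W (θ : ℝ) : ℂ :=
  (4 : ℂ) ^ (-(1 : ℂ) / 3) * Complex.exp (Complex.I * ((π : ℂ) / 6)) +
    (2 : ℂ) ^ (-(2 : ℂ) / 3) * Complex.exp (-Complex.I * (((π : ℂ) + 4 * (θ : ℂ)) / 6))

/-- `U(θ) = t₂ − 2^{−2/3}·e^{i(π−4θ)/6}`. -/
noncomputable def U (θ : ℝ) : ℂ :=
  (4 : ℂ) ^ (-(1 : ℂ) / 3) * Complex.exp (Complex.I * (5 * (π : ℂ) / 6)) -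
    (2 : ℂ) ^ (-(2 : ℂ) / 3) * Complex.exp (Complex.I * (((π : ℂ) - 4 * (θ : ℂ)) / 6))

/-- Real part of `f θ` at a point on the rotated real line `R·e^{−iθ/3}`. -/
lemma re_f (θ R : ℝ) :
    (f θ ((R : ℂ) * Complex.exp (-Complex.I * ((θ : ℂ)/3)))).re
      = -R * Real.sin θ - R^4 := by
  have e1 : Complex.exp (Complex.I * (4*(θ:ℂ)/3)) * Complex.exp (-Complex.I * ((θ:ℂ)/3))
      = Complex.exp ((θ:ℂ) * Complex.I) := by
    rw [← Complex.exp_add]; congr 1; ring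
  have e2 : Complex.exp (Complex.I * (4*(θ:ℂ)/3)) * (Complex.exp (-Complex.I * ((θ:ℂ)/3)))^4
      = 1 := by
    rw [← Complex.exp_nat_mul, ← Complex.exp_add,
      show Complex.I * (4*(θ:ℂ)/3) + (4:ℕ) * (-Complex.I * ((θ:ℂ)/3)) = 0 by push_cast; ring,
      Complex.exp_zero]
  have key : f θ ((R:ℂ) * Complex.exp (-Complex.I * ((θ:ℂ)/3)))
      = Complex.I * (R:ℂ) * Complex.exp ((θ:ℂ) * Complex.I) - (R:ℂ)^4 := by
    simp only [f]
    linear_combination (Complex.I * (R:ℂ)) * e1 - (R:ℂ)^4 * e2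
  rw [key, Complex.exp_mul_I, ← Complex.ofReal_cos, ← Complex.ofReal_sin, ← Complex.ofReal_pow]
  simp [Complex.mul_re, Complex.mul_im, Complex.sin_ofReal_re, Complex.cos_ofReal_re,
    ← Complex.ofReal_pow, Complex.ofReal_re]

lemma hb4 : (4 : ℂ) ^ (-(1 : ℂ) / 3) = (((2:ℝ) ^ (-(2/3) : ℝ) : ℝ) : ℂ) := by
  have h1 : (4:ℝ) ^ (-(1/3) : ℝ) = (2:ℝ) ^ (-(2/3) : ℝ) := by
    have h4 : (4:ℝ) = (2:ℝ) ^ ((2:ℕ) : ℝ) := by rw [Real.rpow_natCast]; norm_num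
    rw [h4, ← Real.rpow_mul (by norm_num : (0:ℝ) ≤ 2)]
    norm_num
  rw [← h1, show (-(1:ℂ)/3) = ((-(1/3) : ℝ) : ℂ) by push_cast; ring,
    show (4:ℂ) = ((4:ℝ) : ℂ) by norm_num, ← Complex.ofReal_cpow (by norm_num : (0:ℝ) ≤ 4)]

lemma hb2 : (2 : ℂ) ^ (-(2 : ℂ) / 3) = (((2:ℝ) ^ (-(2/3) : ℝ) : ℝ) : ℂ) := by
  rw [show (-(2:ℂ)/3) = ((-(2/3) : ℝ) : ℂ) by push_cast; ring,
    show (2:ℂ) = ((2:ℝ) : ℂ) by norm_num, ← Complex.ofReal_cpow (by norm_num : (0:ℝ) ≤ 2)]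

lemma hbb : 2 * (2:ℝ) ^ (-(2/3) : ℝ) = (2:ℝ) ^ ((1:ℝ)/3) := by
  nth_rewrite 1 [show (2:ℝ) = (2:ℝ) ^ ((1:ℕ) : ℝ) by rw [Real.rpow_natCast]; norm_num]
  rw [← Real.rpow_add (by norm_num : (0:ℝ) < 2)]
  norm_num

lemma W_eq (θ : ℝ) :
    W θ = (((2:ℝ) ^ ((1:ℝ)/3) * Real.cos (π/6 + θ/3) : ℝ) : ℂ)
      * Complex.exp (-Complex.I * ((θ : ℂ)/3)) := by
  have s1 : Complex.exp (Complex.I * ((π:ℂ)/6))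
      = Complex.exp (-Complex.I * ((θ:ℂ)/3)) * Complex.exp (((π/6 + θ/3 : ℝ) : ℂ) * Complex.I) := by
    rw [← Complex.exp_add]; congr 1; push_cast; ring
  have s2 : Complex.exp (-Complex.I * (((π:ℂ) + 4*(θ:ℂ))/6))
      = Complex.exp (-Complex.I * ((θ:ℂ)/3)) * Complex.exp (-((π/6 + θ/3 : ℝ) : ℂ) * Complex.I) := by
    rw [← Complex.exp_add]; congr 1; push_cast; ring
  have s3 : Complex.exp (((π/6 + θ/3 : ℝ) : ℂ) * Complex.I)
        + Complex.exp (-((π/6 + θ/3 : ℝ) : ℂ) * Complex.I)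
      = 2 * ((Real.cos (π/6 + θ/3) : ℝ) : ℂ) := by
    rw [Complex.ofReal_cos, Complex.cos]; ring
  have hc : (((2:ℝ) ^ ((1:ℝ)/3) * Real.cos (π/6 + θ/3) : ℝ) : ℂ)
      = (((2:ℝ) ^ (-(2/3) : ℝ) : ℝ) : ℂ) * (2 * ((Real.cos (π/6 + θ/3) : ℝ) : ℂ)) := by
    rw [← hbb]; push_cast; ring
  rw [W, hb4, hb2, s1, s2, hc]
  linear_combination ((((2:ℝ) ^ (-(2/3) : ℝ) : ℝ) : ℂ) * Complex.exp (-Complex.I * ((θ:ℂ)/3))) * s3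

lemma U_eq (θ : ℝ) :
    U θ = ((-((2:ℝ) ^ ((1:ℝ)/3) * Real.cos (π/6 - θ/3)) : ℝ) : ℂ)
      * Complex.exp (-Complex.I * ((θ : ℂ)/3)) := by
  have s1 : Complex.exp (Complex.I * (5*(π:ℂ)/6))
      = Complex.exp (-Complex.I * ((θ:ℂ)/3)) * (Complex.exp ((π:ℂ) * Complex.I)
          * Complex.exp (-((π/6 - θ/3 : ℝ) : ℂ) * Complex.I)) := by
    rw [← Complex.exp_add, ← Complex.exp_add]; congr 1; push_cast; ring
  have s2 : Complex.exp (Complex.I * (((π:ℂ) - 4*(θ:ℂ))/6))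
      = Complex.exp (-Complex.I * ((θ:ℂ)/3)) * Complex.exp (((π/6 - θ/3 : ℝ) : ℂ) * Complex.I) := by
    rw [← Complex.exp_add]; congr 1; push_cast; ring
  have s3 : Complex.exp (((π/6 - θ/3 : ℝ) : ℂ) * Complex.I)
        + Complex.exp (-((π/6 - θ/3 : ℝ) : ℂ) * Complex.I)
      = 2 * ((Real.cos (π/6 - θ/3) : ℝ) : ℂ) := by
    rw [Complex.ofReal_cos, Complex.cos]; ring
  have hc : ((-((2:ℝ) ^ ((1:ℝ)/3) * Real.cos (π/6 - θ/3)) : ℝ) : ℂ)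
      = -((((2:ℝ) ^ (-(2/3) : ℝ) : ℝ) : ℂ) * (2 * ((Real.cos (π/6 - θ/3) : ℝ) : ℂ))) := by
    rw [← hbb]; push_cast; ring
  rw [U, hb4, hb2, s1, s2, hc, Complex.exp_pi_mul_I]
  linear_combination (-(((2:ℝ) ^ (-(2/3) : ℝ) : ℝ) : ℂ) * Complex.exp (-Complex.I * ((θ:ℂ)/3))) * s3

lemma t_cube : ((2:ℝ) ^ ((1:ℝ)/3)) ^ (3:ℕ) = 2 := by
  rw [← Real.rpow_natCast ((2:ℝ) ^ ((1:ℝ)/3)) 3, ← Real.rpow_mul (by norm_num : (0:ℝ) ≤ 2)]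
  norm_num

lemma t_lb : (1.2599210 : ℝ) ≤ (2:ℝ) ^ ((1:ℝ)/3) := by
  set t := (2:ℝ) ^ ((1:ℝ)/3) with ht
  have h3 : t ^ (3:ℕ) = 2 := t_cube
  have hp : (0:ℝ) < t := Real.rpow_pos_of_pos (by norm_num) _
  nlinarith [sq_nonneg (t - 1.2599211), sq_nonneg (t + 1.2599211), sq_nonneg t]

lemma cos_5pi12 : Real.cos (5*π/12) = √2/2 * (√3/2) - √2/2 * (1/2) := by
  rw [show 5*π/12 = π/4 + π/6 by ring, Real.cos_add, Real.cos_pi_div_four,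
    Real.cos_pi_div_six, Real.sin_pi_div_four, Real.sin_pi_div_six]

lemma key_ineq (ψ : ℝ) (h1 : π/8 ≤ ψ) (h2 : ψ ≤ 5*π/24) :
    (2:ℝ) ^ ((1:ℝ)/3) * (2 * Real.cos ψ ^ 4 - 3 * Real.cos ψ ^ 2) ≤ -1.38 := by
  have hπ : 0 < π := Real.pi_pos
  have hc_le : Real.cos ψ ≤ Real.cos (π/8) :=
    Real.cos_le_cos_of_nonneg_of_le_pi (by linarith) (by linarith) h1
  have hc_ge : Real.cos (5*π/24) ≤ Real.cos ψ :=
    Real.cos_le_cos_of_nonneg_of_le_pi (by linarith) (by linarith) h2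
  have hc0 : (0:ℝ) ≤ Real.cos (5*π/24) :=
    Real.cos_nonneg_of_mem_Icc ⟨by linarith, by linarith⟩
  have hsq_hi : Real.cos (π/8) ^ 2 = 1/2 + √2/4 := by
    rw [Real.cos_sq, show 2*(π/8) = π/4 by ring, Real.cos_pi_div_four]; ring
  have hsq_lo : Real.cos (5*π/24) ^ 2 = 1/2 + (√2/2 * (√3/2) - √2/2 * (1/2))/2 := by
    rw [Real.cos_sq, show 2*(5*π/24) = 5*π/12 by ring, cos_5pi12]
  have s2a : (1.414213 : ℝ) ≤ √2 := by
    nlinarith [Real.sq_sqrt (by norm_num : (0:ℝ) ≤ 2), Real.sqrt_nonneg 2]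
  have s2b : √2 ≤ (1.414214 : ℝ) := by
    nlinarith [Real.sq_sqrt (by norm_num : (0:ℝ) ≤ 2), Real.sqrt_nonneg 2]
  have s3a : (1.732050 : ℝ) ≤ √3 := by
    nlinarith [Real.sq_sqrt (by norm_num : (0:ℝ) ≤ 3), Real.sqrt_nonneg 3]
  set x := Real.cos ψ ^ 2 with hx
  have hx_hi : x ≤ 0.8535535 := by
    have : x ≤ Real.cos (π/8) ^ 2 := by
      have hcψ : 0 ≤ Real.cos ψ := le_trans hc0 hc_ge
      nlinarith
    rw [hsq_hi] at this; nlinarith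
  have hx_lo : (0.6294093 : ℝ) ≤ x := by
    have : Real.cos (5*π/24) ^ 2 ≤ x := by nlinarith
    rw [hsq_lo] at this; nlinarith
  have hq : (1.09531 : ℝ) ≤ 3*x - 2*x^2 := by
    nlinarith [mul_nonneg (sub_nonneg.2 hx_lo) (sub_nonneg.2 hx_hi)]
  have ht := t_lb
  have hqpos : (0:ℝ) ≤ 3*x - 2*x^2 := by linarith
  have hx4 : Real.cos ψ ^ 4 = x^2 := by rw [hx]; ring
  rw [hx4]
  nlinarith [mul_le_mul ht hq (by norm_num) (by linarith : (0:ℝ) ≤ (2:ℝ) ^ ((1:ℝ)/3))]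

/-- For `θ ∈ [−π/8, π/8]`, `Re f_θ(W(θ)) ≤ −1.38` and `Re f_θ(U(θ)) ≤ −1.38`. -/
theorem pearcey_tail_endpoints_bound (θ : ℝ) (hθ : θ ∈ Set.Icc (-(π / 8)) (π / 8)) :
    (f θ (W θ)).re ≤ -1.38 ∧ (f θ (U θ)).re ≤ -1.38 := by
  obtain ⟨hθ1, hθ2⟩ := hθ
  have hπ : 0 < π := Real.pi_pos
  constructor
  · rw [W_eq, re_f]
    set ψ := π/6 + θ/3 with hψ
    have hs : Real.sin θ = -Real.cos (3*ψ) := by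
      rw [show θ = 3*ψ - π/2 by rw [hψ]; ring, Real.sin_sub_pi_div_two]
    rw [hs, Real.cos_three_mul]
    have hk := key_ineq ψ (by rw [hψ]; linarith) (by rw [hψ]; linarith)
    have heq : -((2:ℝ)^((1:ℝ)/3) * Real.cos ψ) * -(4*Real.cos ψ^3 - 3*Real.cos ψ)
        - ((2:ℝ)^((1:ℝ)/3) * Real.cos ψ)^4
        = (2:ℝ)^((1:ℝ)/3) * (2*Real.cos ψ^4 - 3*Real.cos ψ^2) := by
      linear_combination (-(Real.cos ψ^4 * (2:ℝ)^((1:ℝ)/3))) * t_cube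
    linarith [hk, heq]
  · rw [U_eq, re_f]
    set ψ := π/6 - θ/3 with hψ
    have hs : Real.sin θ = Real.cos (3*ψ) := by
      rw [show θ = π/2 - 3*ψ by rw [hψ]; ring, Real.sin_pi_div_two_sub]
    rw [hs, Real.cos_three_mul]
    have hk := key_ineq ψ (by rw [hψ]; linarith) (by rw [hψ]; linarith)
    have heq : - -((2:ℝ)^((1:ℝ)/3) * Real.cos ψ) * (4*Real.cos ψ^3 - 3*Real.cos ψ)
        - (-((2:ℝ)^((1:ℝ)/3) * Real.cos ψ))^4
        = (2:ℝ)^((1:ℝ)/3) * (2*Real.cos ψ^4 - 3*Real.cos ψ^2) := by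
      linear_combination (-(Real.cos ψ^4 * (2:ℝ)^((1:ℝ)/3))) * t_cube
    linarith [hk, heq]
end
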